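/- arXiv:1411.7273 — 8 statements merged into one kernel-verified Lean document; each statement's English description precedes it below -/
import Mathlib

section
/- Let π be an optimal injective matching of B + t into A. Then every point b + t with b ∈ B is matched by π to one of its m nearest neighbors in A, where m = |B|. -/
open scoped BigOperators

/-- In an optimal matching, each point `b i + t` is matched to one of its `m` nearest
neighbors in `A`: fewer than `m` points of `A` are strictly closer to `b i + t` than its
matched point. -/
theorem stmt5 (m n : ℕ) (hmn : m ≤ n) (b : Fin m → EuclideanSpace ℝ (Fin 2))
    (a : Fin n → EuclideanSpace ℝ (Fin 2)) (ha : Function.Injective a)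
    (t : EuclideanSpace ℝ (Fin 2))
    (hties : ∀ (p : Fin m) (r s : Fin n), r ≠ s →
      ‖b p + t - a r‖ ≠ ‖b p + t - a s‖)
    (π : Fin m → Fin n) (hπ : Function.Injective π)
    (hopt : ∀ σ : Fin m → Fin n, Function.Injective σ →
      ∑ i, ‖b i + t - a (π i)‖ ^ 2 ≤ ∑ i, ‖b i + t - a (σ i)‖ ^ 2) :
    ∀ i : Fin m,
      (Finset.univ.filter fun j : Fin n =>
        ‖b i + t - a j‖ < ‖b i + t - a (π i)‖).card < m := by
  intro i
  by_contra h
  push_neg at h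
  set S := Finset.univ.filter fun j : Fin n =>
    ‖b i + t - a j‖ < ‖b i + t - a (π i)‖ with hS
  have hπi : π i ∉ S := by simp [hS]
  have hm1 : 1 ≤ m := i.pos
  have hex : ∃ j ∈ S, ∀ k, π k ≠ j := by
    by_contra hc
    push_neg at hc
    have hsub : S ⊆ (Finset.univ.image π).erase (π i) := by
      intro j hj
      obtain ⟨k, hk⟩ := hc j hj
      refine Finset.mem_erase.2 ⟨?_, Finset.mem_image.2 ⟨k, Finset.mem_univ _, hk⟩⟩
      rintro rfl; exact hπi hj
    have hcard : (Finset.univ.image π).card = m := by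
      rw [Finset.card_image_of_injective _ hπ, Finset.card_univ, Fintype.card_fin]
    have hle : S.card ≤ m - 1 := by
      calc S.card ≤ ((Finset.univ.image π).erase (π i)).card := Finset.card_le_card hsub
        _ ≤ m - 1 := by
            rw [Finset.card_erase_of_mem (Finset.mem_image_of_mem _ (Finset.mem_univ i)),
              hcard]
    omega
  obtain ⟨j, hjS, hj⟩ := hex
  have hjlt : ‖b i + t - a j‖ < ‖b i + t - a (π i)‖ := by
    have := Finset.mem_filter.1 hjS
    exact this.2
  set σ : Fin m → Fin n := fun k => if k = i then j else π k with hσ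
  have hσinj : Function.Injective σ := by
    intro x y hxy
    simp only [hσ] at hxy
    by_cases hx : x = i <;> by_cases hy : y = i <;> simp [hx, hy] at hxy ⊢
    · exact absurd hxy.symm (hj y)
    · exact absurd hxy (hj x)
    · exact hπ hxy
  have hlt : ∑ k, ‖b k + t - a (σ k)‖ ^ 2 < ∑ k, ‖b k + t - a (π k)‖ ^ 2 := by
    apply Finset.sum_lt_sum
    · intro k _
      by_cases hk : k = i
      · subst hk
        simp only [hσ, if_pos rfl]
        exact le_of_lt (by
          apply pow_lt_pow_left₀ hjlt (norm_nonneg _) (by norm_num))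
      · simp [hσ, hk]
    · exact ⟨i, Finset.mem_univ i, by
        simp only [hσ, if_pos rfl]
        exact pow_lt_pow_left₀ hjlt (norm_nonneg _) (by norm_num)⟩
  exact absurd (hopt σ hσinj) (not_le.2 hlt)
end

section
/- Let π be an optimal injective matching of B + t into A, where all distances from points of B + t to points of A are pairwise distinct. Then at least one point b + t, b ∈ B, is matched by π to its nearest neighbor in A. -/
open scoped BigOperators

/-- In an optimal matching (with no distance ties), at least one point of `B + t` is matched
to its nearest neighbor in `A`. -/
theorem stmt6 (m n : ℕ) (hm : 0 < m) (hmn : m ≤ n)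
    (b : Fin m → EuclideanSpace ℝ (Fin 2))
    (a : Fin n → EuclideanSpace ℝ (Fin 2)) (ha : Function.Injective a)
    (t : EuclideanSpace ℝ (Fin 2))
    (hties : ∀ (p : Fin m) (r s : Fin n), r ≠ s →
      ‖b p + t - a r‖ ≠ ‖b p + t - a s‖)
    (π : Fin m → Fin n) (hπ : Function.Injective π)
    (hopt : ∀ σ : Fin m → Fin n, Function.Injective σ →
      ∑ i, ‖b i + t - a (π i)‖ ^ 2 ≤ ∑ i, ‖b i + t - a (σ i)‖ ^ 2) :
    ∃ i : Fin m, ∀ j : Fin n, ‖b i + t - a (π i)‖ ≤ ‖b i + t - a j‖ := by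
  by_contra h
  push_neg at h
  have hn : 0 < n := lt_of_lt_of_le hm hmn
  -- choose a nearest neighbor for each point
  have hNex : ∀ i : Fin m, ∃ j : Fin n, ∀ k : Fin n,
      ‖b i + t - a j‖ ≤ ‖b i + t - a k‖ := by
    intro i
    obtain ⟨j, -, hj⟩ := Finset.exists_min_image Finset.univ
      (fun k => ‖b i + t - a k‖) ⟨⟨0, hn⟩, Finset.mem_univ _⟩
    exact ⟨j, fun k => hj k (Finset.mem_univ k)⟩
  choose N hN using hNex
  have hNne : ∀ i, N i ≠ π i := by
    intro i e
    obtain ⟨j, hj⟩ := h i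
    have := hN i j
    rw [e] at this
    linarith
  have hlt : ∀ i, ‖b i + t - a (N i)‖ < ‖b i + t - a (π i)‖ := fun i =>
    lt_of_le_of_ne (hN i (π i)) (hties i (N i) (π i) (hNne i))
  -- each nearest neighbor is in the range of π
  have hrange : ∀ i, ∃ i', π i' = N i := by
    intro i
    by_contra hr
    push_neg at hr
    set σ : Fin m → Fin n := Function.update π i (N i) with hσ
    have hσinj : Function.Injective σ := by
      intro x y hxy
      rcases eq_or_ne x i with rfl | hx
      · rcases eq_or_ne y x with rfl | hy
        · rfl
        · exfalso
          rw [hσ, Function.update_self, Function.update_of_ne hy] at hxy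
          exact hr y hxy.symm
      · rcases eq_or_ne y i with rfl | hy
        · exfalso
          rw [hσ, Function.update_self, Function.update_of_ne hx] at hxy
          exact hr x hxy
        · rw [hσ, Function.update_of_ne hx, Function.update_of_ne hy] at hxy
          exact hπ hxy
    have hlt' : ∑ k, ‖b k + t - a (σ k)‖ ^ 2 < ∑ k, ‖b k + t - a (π k)‖ ^ 2 := by
      apply Finset.sum_lt_sum
      · intro k _
        rcases eq_or_ne k i with rfl | hk
        · rw [hσ, Function.update_self]
          exact pow_le_pow_left₀ (norm_nonneg _) (hN k (π k)) 2
        · rw [hσ, Function.update_of_ne hk]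
      · exact ⟨i, Finset.mem_univ i, by
          rw [hσ, Function.update_self]
          exact pow_lt_pow_left₀ (hlt i) (norm_nonneg _) (by norm_num)⟩
    exact absurd (hopt σ hσinj) (not_le.mpr hlt')
  choose g hg using hrange
  -- find a periodic point of g
  have hper : ∃ (j : Fin m) (p : ℕ), 0 < p ∧ g^[p] j = j := by
    obtain ⟨x, y, hxy, hgxy⟩ := Fintype.exists_ne_map_eq_of_card_lt
      (fun s : Fin (m + 1) => g^[s.1] (⟨0, hm⟩ : Fin m)) (by simp)
    have hxy' : x.1 ≠ y.1 := fun e => hxy (Fin.ext e)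
    rcases hxy'.lt_or_gt with hlt' | hlt'
    · refine ⟨g^[x.1] ⟨0, hm⟩, y.1 - x.1, Nat.sub_pos_of_lt hlt', ?_⟩
      rw [← Function.iterate_add_apply, Nat.sub_add_cancel hlt'.le]
      exact hgxy.symm
    · refine ⟨g^[y.1] ⟨0, hm⟩, x.1 - y.1, Nat.sub_pos_of_lt hlt', ?_⟩
      rw [← Function.iterate_add_apply, Nat.sub_add_cancel hlt'.le]
      exact hgxy
  obtain ⟨j, p, hp, hpj⟩ := hper
  set C : Finset (Fin m) := Finset.image (fun s => g^[s] j) (Finset.range p) with hC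
  have hjC : j ∈ C := by
    rw [hC]
    exact Finset.mem_image.mpr ⟨0, Finset.mem_range.mpr hp, rfl⟩
  have hCper : ∀ x ∈ C, g^[p] x = x := by
    intro x hx
    rw [hC] at hx
    obtain ⟨s, -, rfl⟩ := Finset.mem_image.mp hx
    rw [← Function.iterate_add_apply, add_comm, Function.iterate_add_apply, hpj]
  have hCg : ∀ x ∈ C, g x ∈ C := by
    intro x hx
    rw [hC] at hx ⊢
    obtain ⟨s, hs, rfl⟩ := Finset.mem_image.mp hx
    rw [Finset.mem_range] at hs
    have : g (g^[s] j) = g^[s + 1] j := (Function.iterate_succ_apply' g s j).symm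
    rw [this]
    rcases eq_or_lt_of_le (Nat.succ_le_of_lt hs) with he | hlt'
    · rw [Nat.succ_eq_add_one] at he
      rw [he, hpj]
      exact Finset.mem_image.mpr ⟨0, Finset.mem_range.mpr hp, rfl⟩
    · exact Finset.mem_image.mpr ⟨s + 1, Finset.mem_range.mpr hlt', rfl⟩
  have hCinj : ∀ x ∈ C, ∀ y ∈ C, g x = g y → x = y := by
    intro x hx y hy hxy
    have hx' : g^[p - 1] (g x) = x := by
      rw [← Function.iterate_succ_apply, Nat.succ_eq_add_one,
        Nat.sub_add_cancel hp]
      exact hCper x hx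
    have hy' : g^[p - 1] (g y) = y := by
      rw [← Function.iterate_succ_apply, Nat.succ_eq_add_one,
        Nat.sub_add_cancel hp]
      exact hCper y hy
    rw [← hx', ← hy', hxy]
  -- rotate the matching along the cycle C
  set σ : Fin m → Fin n := fun i => if i ∈ C then π (g i) else π i with hσ
  have hσinj : Function.Injective σ := by
    intro x y hxy
    by_cases hx : x ∈ C <;> by_cases hy : y ∈ C <;>
      simp only [hσ, hx, hy, if_pos, if_neg, if_true, if_false] at hxy
    · exact hCinj x hx y hy (hπ hxy)
    · exact absurd (hπ hxy ▸ hCg x hx) hy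
    · exact absurd ((hπ hxy).symm ▸ hCg y hy) hx
    · exact hπ hxy
  have hlt' : ∑ k, ‖b k + t - a (σ k)‖ ^ 2 < ∑ k, ‖b k + t - a (π k)‖ ^ 2 := by
    apply Finset.sum_lt_sum
    · intro k _
      by_cases hk : k ∈ C
      · simp only [hσ, if_pos hk, hg k]
        exact pow_le_pow_left₀ (norm_nonneg _) (hN k (π k)) 2
      · simp only [hσ, if_neg hk]
        exact le_refl _
    · refine ⟨j, Finset.mem_univ j, ?_⟩
      simp only [hσ, if_pos hjC, hg j]
      exact pow_lt_pow_left₀ (hlt j) (norm_nonneg _) (by norm_num)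
  exact absurd (hopt σ hσinj) (not_le.mpr hlt')
end

section
/- Let π be an optimal injective matching of B + t into A with no distance ties. Then there exists an ordering b_1,…,b_m of B such that for each k, the point b_k + t is matched by π to its nearest neighbor in A ∖ {π(b_1),…,π(b_{k−1})}. In particular, each b_k + t is matched to one of its k nearest neighbors in A. -/
open scoped BigOperators

lemma exchange_key {m n : ℕ} (cost : Fin m → Fin n → ℝ)
    (π : Fin m → Fin n) (hπ : Function.Injective π)
    (hopt : ∀ σ : Fin m → Fin n, Function.Injective σ →
      ∑ i, cost i (π i) ≤ ∑ i, cost i (σ i))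
    (S : Finset (Fin m)) (hS : S.Nonempty) :
    ∃ i ∈ S, ∀ j : Fin n, (∀ l, l ∉ S → π l ≠ j) → cost i (π i) ≤ cost i j := by
  by_contra hc
  push_neg at hc
  choose g hg1 hg2 using hc
  by_cases hA : ∃ i, ∃ hi : i ∈ S, ∀ l ∈ S, π l ≠ g i hi
  · -- Case A : an improving target unused by π; swap it in.
    obtain ⟨i, hi, hgi⟩ := hA
    have hgrange : ∀ l, π l ≠ g i hi := by
      intro l
      by_cases hl : l ∈ S
      · exact hgi l hl
      · exact hg1 i hi l hl
    have hσinj : Function.Injective (Function.update π i (g i hi)) := by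
      intro x z hxz
      rcases eq_or_ne x i with hx | hx <;> rcases eq_or_ne z i with hz | hz
      · rw [hx, hz]
      · rw [hx, Function.update_self, Function.update_of_ne hz] at hxz
        exact absurd hxz.symm (hgrange z)
      · rw [hz, Function.update_self, Function.update_of_ne hx] at hxz
        exact absurd hxz (hgrange x)
      · rw [Function.update_of_ne hx, Function.update_of_ne hz] at hxz
        exact hπ hxz
    have hlt : ∑ l, cost l (Function.update π i (g i hi) l) < ∑ l, cost l (π l) := by
      apply Finset.sum_lt_sum
      · intro x _
        rcases eq_or_ne x i with rfl | hx
        · rw [Function.update_self]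
          exact (hg2 x hi).le
        · rw [Function.update_of_ne hx]
      · exact ⟨i, Finset.mem_univ i, by rw [Function.update_self]; exact hg2 i hi⟩
    exact absurd (hopt _ hσinj) (not_le.mpr hlt)
  · -- Case B : every improving target is used inside S; find a cycle and rotate.
    push_neg at hA
    choose f hf1 hf2 using hA
    set F : Fin m → Fin m := fun i => if hi : i ∈ S then f i hi else i with hF
    have hFS : ∀ i ∈ S, F i ∈ S := by
      intro i hi; simp only [hF, dif_pos hi]; exact hf1 i hi
    have hFπ : ∀ i (hi : i ∈ S), π (F i) = g i hi := by
      intro i hi; simp only [hF, dif_pos hi]; exact hf2 i hi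
    obtain ⟨i0, hi0⟩ := hS
    have hiter : ∀ k : ℕ, F^[k] i0 ∈ S := by
      intro k
      induction k with
      | zero => simpa using hi0
      | succ k ih => rw [Function.iterate_succ_apply']; exact hFS _ ih
    obtain ⟨p, q, hpq, heq⟩ : ∃ p q : ℕ, p ≠ q ∧ F^[p] i0 = F^[q] i0 := by
      obtain ⟨p, q, hpq, heq⟩ := Finite.exists_ne_map_eq_of_infinite (fun k : ℕ => F^[k] i0)
      exact ⟨p, q, hpq, heq⟩
    -- wlog p < q
    obtain ⟨p, q, hlt', heq⟩ : ∃ p q : ℕ, p < q ∧ F^[p] i0 = F^[q] i0 := by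
      rcases hpq.lt_or_gt with h | h
      exacts [⟨p, q, h, heq⟩, ⟨q, p, h, heq.symm⟩]
    set y : Fin m := F^[p] i0 with hy
    set r : ℕ := q - p with hr
    have hr1 : 1 ≤ r := by omega
    have hyper : F^[r] y = y := by
      rw [hy, ← Function.iterate_add_apply, hr]
      rw [Nat.sub_add_cancel hlt'.le]
      exact heq.symm
    have hys : ∀ s : ℕ, F^[s] y ∈ S := fun s => by
      rw [hy, ← Function.iterate_add_apply]; exact hiter _
    set O : Finset (Fin m) := (Finset.range r).image (fun s => F^[s] y) with hO
    have hyO : y ∈ O := by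
      refine Finset.mem_image.mpr ⟨0, Finset.mem_range.mpr hr1, rfl⟩
    have hOS : ∀ i ∈ O, i ∈ S := by
      intro i hi
      obtain ⟨s, _, rfl⟩ := Finset.mem_image.mp hi
      exact hys s
    have hFO : ∀ i ∈ O, F i ∈ O := by
      intro i hi
      obtain ⟨s, hs, rfl⟩ := Finset.mem_image.mp hi
      have hstep : F (F^[s] y) = F^[s + 1] y := (Function.iterate_succ_apply' F s y).symm
      rw [hstep]
      rcases eq_or_lt_of_le (Nat.succ_le_of_lt (Finset.mem_range.mp hs)) with h | h
      · rw [show s + 1 = r by omega, hyper]; exact hyO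
      · exact Finset.mem_image.mpr ⟨s + 1, Finset.mem_range.mpr h, rfl⟩
    have hrecover : ∀ i ∈ O, F^[r - 1] (F i) = i := by
      intro i hi
      obtain ⟨s, _, rfl⟩ := Finset.mem_image.mp hi
      have h1 : F (F^[s] y) = F^[s + 1] y := (Function.iterate_succ_apply' F s y).symm
      rw [h1, ← Function.iterate_add_apply]
      have h2 : r - 1 + (s + 1) = s + r := by omega
      rw [h2, Function.iterate_add_apply, hyper]
    set c : Fin m → Fin m := fun i => if i ∈ O then F i else i with hc'
    have hcinj : Function.Injective c := by
      intro x z hxz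
      by_cases hx : x ∈ O <;> by_cases hz : z ∈ O
      · simp only [hc', if_pos hx, if_pos hz] at hxz
        rw [← hrecover x hx, ← hrecover z hz, hxz]
      · simp only [hc', if_pos hx, if_neg hz] at hxz
        exact absurd (hxz ▸ hFO x hx) hz
      · simp only [hc', if_neg hx, if_pos hz] at hxz
        exact absurd (hxz ▸ hFO z hz) hx
      · simpa only [hc', if_neg hx, if_neg hz] using hxz
    set σ : Fin m → Fin n := fun i => π (c i) with hσ
    have hσinj : Function.Injective σ := fun x z h => hcinj (hπ h)
    have hlt : ∑ l, cost l (σ l) < ∑ l, cost l (π l) := by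
      apply Finset.sum_lt_sum
      · intro x _
        by_cases hx : x ∈ O
        · have hxS := hOS x hx
          simp only [hσ, hc', if_pos hx]
          rw [hFπ x hxS]
          exact (hg2 x hxS).le
        · simp [hσ, hc', if_neg hx]
      · refine ⟨y, Finset.mem_univ y, ?_⟩
        have hyS := hOS y hyO
        simp only [hσ, hc', if_pos hyO]
        rw [hFπ y hyS]
        exact hg2 y hyS
    exact absurd (hopt σ hσinj) (not_le.mpr hlt)


lemma build_order {m n : ℕ} (cost : Fin m → Fin n → ℝ) (π : Fin m → Fin n)
    (hkey : ∀ S : Finset (Fin m), S.Nonempty →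
      ∃ i ∈ S, ∀ j : Fin n, (∀ l, l ∉ S → π l ≠ j) → cost i (π i) ≤ cost i j)
    (S : Finset (Fin m)) :
    ∃ L : List (Fin m), L.Nodup ∧ L.toFinset = S ∧
      ∀ (k : ℕ) (hk : k < L.length), ∀ j : Fin n,
        (∀ l : Fin m, (l ∉ S ∨ l ∈ L.take k) → π l ≠ j) →
        cost (L[k]'hk) (π (L[k]'hk)) ≤ cost (L[k]'hk) j := by
  induction S using Finset.strongInductionOn with
  | _ S ih =>
    rcases S.eq_empty_or_nonempty with rfl | hS
    · exact ⟨[], List.nodup_nil, rfl, fun k hk => absurd hk (by simp)⟩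
    · obtain ⟨i, hi, hikey⟩ := hkey S hS
      obtain ⟨L', hnd, htf, hprop⟩ := ih (S.erase i) (Finset.erase_ssubset hi)
      refine ⟨i :: L', ?_, ?_, ?_⟩
      · refine List.nodup_cons.mpr ⟨?_, hnd⟩
        intro hmem
        have : i ∈ S.erase i := htf ▸ List.mem_toFinset.mpr hmem
        simp at this
      · rw [List.toFinset_cons, htf, Finset.insert_erase hi]
      · intro k hk j hj
        match k with
        | 0 =>
          simp only [List.getElem_cons_zero]
          exact hikey j (fun l hl => hj l (Or.inl hl))
        | (k' + 1) =>
          simp only [List.getElem_cons_succ]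
          refine hprop k' (by simpa using hk) j ?_
          intro l hl
          refine hj l ?_
          rcases hl with hl | hl
          · rw [Finset.mem_erase] at hl
            push_neg at hl
            by_cases hli : l = i
            · subst hli
              exact Or.inr (by simp [List.take_succ_cons])
            · exact Or.inl (hl hli)
          · exact Or.inr (by simp [List.take_succ_cons, hl])


/-- For an optimal matching with no distance ties, there is an ordering of `B` (a permutation
`e` of the indices) such that each `b (e k) + t` is matched to its nearest neighbor among the
points of `A` not claimed by the earlier elements of the ordering; in particular each
`b (e k) + t` is matched to one of its `k+1` nearest neighbors in `A` (at most `k` points of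
`A` are strictly closer). -/
theorem stmt7 (m n : ℕ) (hmn : m ≤ n)
    (b : Fin m → EuclideanSpace ℝ (Fin 2))
    (a : Fin n → EuclideanSpace ℝ (Fin 2)) (ha : Function.Injective a)
    (t : EuclideanSpace ℝ (Fin 2))
    (hties : ∀ (p : Fin m) (r s : Fin n), r ≠ s →
      ‖b p + t - a r‖ ≠ ‖b p + t - a s‖)
    (π : Fin m → Fin n) (hπ : Function.Injective π)
    (hopt : ∀ σ : Fin m → Fin n, Function.Injective σ →
      ∑ i, ‖b i + t - a (π i)‖ ^ 2 ≤ ∑ i, ‖b i + t - a (σ i)‖ ^ 2) :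
    ∃ e : Equiv.Perm (Fin m),
      (∀ k : Fin m, ∀ j : Fin n, (∀ l : Fin m, l < k → π (e l) ≠ j) →
        ‖b (e k) + t - a (π (e k))‖ ≤ ‖b (e k) + t - a j‖) ∧
      (∀ k : Fin m,
        (Finset.univ.filter fun j : Fin n =>
          ‖b (e k) + t - a j‖ < ‖b (e k) + t - a (π (e k))‖).card ≤ (k : ℕ)) := by
  classical
  have hkey : ∀ S : Finset (Fin m), S.Nonempty →
      ∃ i ∈ S, ∀ j : Fin n, (∀ l, l ∉ S → π l ≠ j) →
        ‖b i + t - a (π i)‖ ≤ ‖b i + t - a j‖ := by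
    intro S hS
    obtain ⟨i, hi, hk⟩ := exchange_key (fun i j => ‖b i + t - a j‖ ^ 2) π hπ hopt S hS
    refine ⟨i, hi, fun j hj => ?_⟩
    have h2 := hk j hj
    exact (pow_le_pow_iff_left₀ (norm_nonneg _) (norm_nonneg _) two_ne_zero).mp h2
  obtain ⟨L, hnd, htf, hprop⟩ :=
    build_order (fun i j => ‖b i + t - a j‖) π hkey Finset.univ
  have hlen : L.length = m := by
    have h1 : L.toFinset.card = L.length := List.toFinset_card_of_nodup hnd
    rw [htf] at h1
    simpa using h1.symm
  have hmem : ∀ k : Fin m, (k : ℕ) < L.length := fun k => by rw [hlen]; exact k.2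
  set e0 : Fin m → Fin m := fun k => L[(k : ℕ)]'(hmem k) with he0
  have he0inj : Function.Injective e0 := by
    intro x y hxy
    have := (List.Nodup.getElem_inj_iff hnd).mp hxy
    exact Fin.ext this
  refine ⟨Equiv.ofBijective e0 (Finite.injective_iff_bijective.mp he0inj), ?_⟩
  have main : ∀ k : Fin m, ∀ j : Fin n,
      (∀ l : Fin m, l < k → π (e0 l) ≠ j) →
      ‖b (e0 k) + t - a (π (e0 k))‖ ≤ ‖b (e0 k) + t - a j‖ := by
    intro k j hj
    refine hprop (k : ℕ) (hmem k) j ?_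
    intro l hl
    rcases hl with hl | hl
    · exact absurd (Finset.mem_univ l) hl
    · rw [List.mem_take_iff_getElem] at hl
      obtain ⟨s, hs, hsl⟩ := hl
      have hs1 : s < (k : ℕ) := lt_of_lt_of_le hs (min_le_left _ _)
      have hsm : s < m := lt_trans hs1 k.2
      have hel : e0 ⟨s, hsm⟩ = l := hsl
      rw [← hel]
      exact hj ⟨s, hsm⟩ hs1
  refine ⟨main, ?_⟩
  intro k
  have hsub : (Finset.univ.filter fun j : Fin n =>
      ‖b (e0 k) + t - a j‖ < ‖b (e0 k) + t - a (π (e0 k))‖) ⊆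
      (Finset.Iio k).image (fun l => π (e0 l)) := by
    intro j hjmem
    rw [Finset.mem_filter] at hjmem
    by_cases hex : ∃ l : Fin m, l < k ∧ π (e0 l) = j
    · obtain ⟨l, hl, hlj⟩ := hex
      exact Finset.mem_image.mpr ⟨l, Finset.mem_Iio.mpr hl, hlj⟩
    · push_neg at hex
      exact absurd (main k j hex) (not_le.mpr hjmem.2)
  calc (Finset.univ.filter fun j : Fin n =>
      ‖b (e0 k) + t - a j‖ < ‖b (e0 k) + t - a (π (e0 k))‖).card
      ≤ ((Finset.Iio k).image (fun l => π (e0 l))).card := Finset.card_le_card hsub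
    _ ≤ (Finset.Iio k).card := Finset.card_image_le
    _ = (k : ℕ) := Fin.card_Iio k
end

section
/- Every matching that minimizes the total squared distance (at a translation t with no distance ties) is Pareto efficient with respect to the preference lists L_t(b_i), where each b_i ranks the points of A in increasing order of distance from b_i + t: there exists no other injective matching σ such that for every b ∈ B, σ(b) equals π(b) or is strictly preferred by b to π(b). -/
open scoped BigOperators

/-- An optimal matching (at a translation with no distance ties) is Pareto efficient with
respect to the distance-induced preference lists: no other injective matching is weakly
preferred by every point of `B`. -/
theorem stmt8 (m n : ℕ) (hmn : m ≤ n)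
    (b : Fin m → EuclideanSpace ℝ (Fin 2))
    (a : Fin n → EuclideanSpace ℝ (Fin 2)) (ha : Function.Injective a)
    (t : EuclideanSpace ℝ (Fin 2))
    (hties : ∀ (p : Fin m) (r s : Fin n), r ≠ s →
      ‖b p + t - a r‖ ≠ ‖b p + t - a s‖)
    (π : Fin m → Fin n) (hπ : Function.Injective π)
    (hopt : ∀ σ : Fin m → Fin n, Function.Injective σ →
      ∑ i, ‖b i + t - a (π i)‖ ^ 2 ≤ ∑ i, ‖b i + t - a (σ i)‖ ^ 2) :
    ¬ ∃ σ : Fin m → Fin n, Function.Injective σ ∧ σ ≠ π ∧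
      ∀ i : Fin m, σ i = π i ∨ ‖b i + t - a (σ i)‖ < ‖b i + t - a (π i)‖ := by
  rintro ⟨σ, hσ, hne, hpref⟩
  obtain ⟨j, hj⟩ := Function.ne_iff.mp hne
  have hstrict : ∀ i, σ i ≠ π i → ‖b i + t - a (σ i)‖ ^ 2 < ‖b i + t - a (π i)‖ ^ 2 := by
    intro i hi
    rcases hpref i with h | h
    · exact absurd h hi
    · exact pow_lt_pow_left₀ h (norm_nonneg _) two_ne_zero
  have hle : ∀ i, ‖b i + t - a (σ i)‖ ^ 2 ≤ ‖b i + t - a (π i)‖ ^ 2 := by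
    intro i
    by_cases hi : σ i = π i
    · rw [hi]
    · exact le_of_lt (hstrict i hi)
  have hsum : ∑ i, ‖b i + t - a (σ i)‖ ^ 2 < ∑ i, ‖b i + t - a (π i)‖ ^ 2 :=
    Finset.sum_lt_sum (fun i _ => hle i) ⟨j, Finset.mem_univ j, hstrict j hj⟩
  exact absurd (hopt σ hσ) (not_le.mpr hsum)
end

section
/- In the abstract preference-list setting with m agents each having a strict preference order over n items (m ≤ n), the number of Pareto efficient injective matchings is at most m!. -/
/-- Pareto efficiency predicate. -/
def IsPE {β : Type*} {α : Type*} (rank : β → α → ℕ) (π : β → α) : Prop :=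
  Function.Injective π ∧ ¬ ∃ σ : β → α, Function.Injective σ ∧ σ ≠ π ∧
    ∀ i, rank i (σ i) ≤ rank i (π i)

/-- In a Pareto efficient matching, some agent receives its globally top item. -/
lemma exists_dictator {β : Type*} {α : Type*} [Finite β] [Nonempty β]
    (rank : β → α → ℕ) (π : β → α) (h : IsPE rank π) :
    ∃ i, ∀ a, rank i (π i) ≤ rank i a := by
  classical
  by_contra hcon
  push_neg at hcon
  choose b hb using hcon
  -- every improving item b i is matched to some agent
  have hmatch : ∀ i, ∃ j, π j = b i := by
    intro i
    by_contra hnm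
    push_neg at hnm
    refine h.2 ⟨Function.update π i (b i), ?_, ?_, ?_⟩
    · intro x y hxy
      by_cases hx : x = i <;> by_cases hy : y = i <;>
        simp [Function.update, hx, hy] at hxy ⊢
      · exact absurd hxy.symm (hnm y)
      · exact absurd hxy (hnm x)
      · exact h.1 hxy
    · intro he
      have := congrFun he i
      simp [Function.update] at this
      exact absurd (this ▸ hb i) (lt_irrefl _)
    · intro j
      by_cases hj : j = i
      · subst hj; simp [Function.update]; exact (hb j).le
      · simp [Function.update, hj]
  choose f hf using hmatch
  have hfne : ∀ i, f i ≠ i := by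
    intro i hfi
    have := hf i
    rw [hfi] at this
    exact absurd (this ▸ hb i) (lt_irrefl _)
  -- find a periodic point of f
  obtain ⟨k, l, hkl, he⟩ : ∃ k l, k < l ∧ f^[k] (Classical.arbitrary β)
      = f^[l] (Classical.arbitrary β) := by
    obtain ⟨x, y, hxy, hexy⟩ :=
      Finite.exists_ne_map_eq_of_infinite (fun t : ℕ => f^[t] (Classical.arbitrary β))
    rcases hxy.lt_or_gt with h' | h'
    · exact ⟨x, y, h', hexy⟩
    · exact ⟨y, x, h', hexy.symm⟩
  set j0 := f^[k] (Classical.arbitrary β) with hj0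
  have hper : f^[l - k] j0 = j0 := by
    rw [hj0, ← Function.iterate_add_apply, Nat.sub_add_cancel hkl.le, ← he]
  have hp : 0 < l - k := Nat.sub_pos_of_lt hkl
  set C : Set β := {j | ∃ t, f^[t] j0 = j} with hC
  have hCf : ∀ j ∈ C, f j ∈ C := by
    rintro j ⟨t, rfl⟩
    exact ⟨t + 1, (Function.iterate_succ_apply' f t j0)⟩
  have hCsurj : ∀ j ∈ C, ∃ c ∈ C, f c = j := by
    rintro j ⟨t, rfl⟩
    refine ⟨f^[t + (l - k) - 1] j0, ⟨_, rfl⟩, ?_⟩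
    calc f (f^[t + (l - k) - 1] j0) = f^[t + (l - k) - 1 + 1] j0 :=
          (Function.iterate_succ_apply' f _ j0).symm
      _ = f^[t + (l - k)] j0 := by congr 1; omega
      _ = f^[t] (f^[l - k] j0) := Function.iterate_add_apply f t (l - k) j0
      _ = f^[t] j0 := by rw [hper]
  set g : β → β := fun j => if j ∈ C then f j else j with hg
  have hgsurj : Function.Surjective g := by
    intro c
    by_cases hc : c ∈ C
    · obtain ⟨d, hdC, hdc⟩ := hCsurj c hc
      exact ⟨d, by simp [hg, hdC, hdc]⟩
    · exact ⟨c, by simp [hg, hc]⟩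
  have hginj : Function.Injective g :=
    (Finite.injective_iff_surjective).mpr hgsurj
  refine h.2 ⟨π ∘ g, h.1.comp hginj, ?_, ?_⟩
  · intro heq
    have hj0C : j0 ∈ C := ⟨0, rfl⟩
    have := congrFun heq j0
    simp only [Function.comp_apply, hg, if_pos hj0C] at this
    exact hfne j0 (h.1 this)
  · intro i
    by_cases hi : i ∈ C
    · simp only [Function.comp_apply, hg, if_pos hi, hf]
      exact (hb i).le
    · simp [hg, if_neg hi]

/-- Restricting a Pareto efficient matching by removing one agent and its item yields a
Pareto efficient matching on the reduced market. -/
lemma restrict_PE {β : Type*} {α : Type*} (rank : β → α → ℕ) (π : β → α)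
    (h : IsPE rank π) (i : β) (c : α) (hc : π i = c) :
    IsPE (fun (j : {j : β // j ≠ i}) (a : {a : α // a ≠ c}) => rank j.1 a.1)
      (fun j => ⟨π j.1, fun he => j.2 (h.1 (by rw [he, ← hc]))⟩) := by
  subst hc
  classical
  constructor
  · intro x y hxy
    exact Subtype.ext (h.1 (congrArg Subtype.val hxy))
  · rintro ⟨σ', hσinj, hσne, hσle⟩
    refine h.2 ⟨fun j => if hj : j = i then π i else (σ' ⟨j, hj⟩).1, ?_, ?_, ?_⟩
    · intro x y hxy
      dsimp only at hxy
      by_cases hx : x = i <;> by_cases hy : y = i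
      · rw [hx, hy]
      · rw [dif_pos hx, dif_neg hy] at hxy
        exact absurd hxy.symm (σ' ⟨y, hy⟩).2
      · rw [dif_neg hx, dif_pos hy] at hxy
        exact absurd hxy (σ' ⟨x, hx⟩).2
      · rw [dif_neg hx, dif_neg hy] at hxy
        have := hσinj (Subtype.ext hxy)
        exact congrArg Subtype.val this
    · intro heq
      obtain ⟨j', hj'⟩ := Function.ne_iff.mp hσne
      have := congrFun heq j'.1
      rw [dif_neg j'.2] at this
      apply hj'
      apply Subtype.ext
      simpa using this
    · intro j
      dsimp only
      by_cases hj : j = i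
      · subst hj; simp
      · rw [dif_neg hj]
        exact hσle ⟨j, hj⟩

/-- The number of Pareto efficient matchings is at most `(card β)!`. -/
lemma count_PE (n : ℕ) : ∀ {β : Type u} {α : Type v} [Fintype β] [Fintype α],
    Fintype.card β = n → ∀ (rank : β → α → ℕ), (∀ i, Function.Injective (rank i)) →
    ({π : β → α | IsPE rank π}).ncard ≤ Nat.factorial n := by
  induction n with
  | zero =>
    intro β α _ _ hcard rank hrank
    have : IsEmpty β := Fintype.card_eq_zero_iff.mp hcard
    have hsub : Subsingleton (β → α) := by
      constructor; intro a b; funext j; exact this.elim j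
    exact Set.ncard_le_one_of_subsingleton _
  | succ n IH =>
    intro β α _ _ hcard rank hrank
    classical
    set S := {π : β → α | IsPE rank π} with hS
    rcases S.eq_empty_or_nonempty with hSe | ⟨π₀, hπ₀⟩
    · simp [hSe]
    have hβ : Nonempty β := Fintype.card_pos_iff.mp (by omega)
    have hα : Nonempty α := ⟨π₀ (Classical.arbitrary β)⟩
    have htop : ∀ i : β, ∃ a : α, ∀ c, rank i a ≤ rank i c := by
      intro i
      obtain ⟨a, _, ha⟩ := Finset.exists_min_image Finset.univ (rank i) Finset.univ_nonempty
      exact ⟨a, fun c => ha c (Finset.mem_univ c)⟩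
    choose top htop using htop
    have hdict : ∀ π ∈ S, ∃ i, π i = top i := by
      intro π hπ
      obtain ⟨i, hi⟩ := exists_dictator rank π hπ
      exact ⟨i, hrank i (le_antisymm (hi (top i)) (htop i (π i)))⟩
    set T : ∀ i : β, Set ({j : β // j ≠ i} → {a : α // a ≠ top i}) :=
      fun i => {q | IsPE (fun j a => rank j.1 a.1) q} with hT
    set D : ↥S → β := fun p => (hdict p.1 p.2).choose with hD
    have hDspec : ∀ p : ↥S, p.1 (D p) = top (D p) := fun p => (hdict p.1 p.2).choose_spec
    set F : ↥S → Σ i : β, ↥(T i) := fun p =>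
      ⟨D p, ⟨fun j => ⟨p.1 j.1, fun he => j.2 (p.2.1 (he.trans (hDspec p).symm))⟩,
        restrict_PE rank p.1 p.2 (D p) (top (D p)) (hDspec p)⟩⟩ with hF
    set G : (Σ i : β, ↥(T i)) → β → α :=
      fun q j => if hj : j = q.1 then top q.1 else (q.2.1 ⟨j, hj⟩).1 with hG
    have hGF : ∀ p : ↥S, G (F p) = p.1 := by
      intro p
      funext j
      by_cases hj : j = D p
      · subst hj; simp only [hG, hF, dif_pos rfl]; exact (hDspec p).symm
      · simp only [hG, hF, dif_neg hj]
    have hFinj : Function.Injective F := by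
      intro p1 p2 hpe
      apply Subtype.ext
      rw [← hGF p1, ← hGF p2, hpe]
    have step1 : Nat.card ↥S ≤ Nat.card (Σ i : β, ↥(T i)) :=
      Nat.card_le_card_of_injective F hFinj
    have step2 : Nat.card (Σ i : β, ↥(T i)) ≤ (n + 1) * Nat.factorial n := by
      have hTle : ∀ i : β, Nat.card ↥(T i) ≤ Nat.factorial n := by
        intro i
        haveI : Fintype {j : β // j ≠ i} := Fintype.ofFinite _
        haveI : Fintype {a : α // a ≠ top i} := Fintype.ofFinite _
        have hcard' : Fintype.card {j : β // j ≠ i} = n := by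
          have h1 : Fintype.card {j : β // ¬ j = i} = Fintype.card β -
              Fintype.card {j : β // j = i} := Fintype.card_subtype_compl _
          rw [Fintype.card_subtype_eq] at h1
          have : Fintype.card {j : β // j ≠ i} = Fintype.card {j : β // ¬ j = i} := rfl
          omega
        rw [Nat.card_coe_set_eq]
        exact IH hcard' _ (fun j => fun a b hab =>
          Subtype.ext (hrank j.1 hab))
      calc Nat.card (Σ i : β, ↥(T i)) = ∑ i : β, Nat.card ↥(T i) := by
            haveI : ∀ i : β, Fintype ↥(T i) := fun i => Fintype.ofFinite _
            rw [Nat.card_eq_fintype_card]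
            rw [Fintype.card_sigma]
            exact Finset.sum_congr rfl fun i _ => (Nat.card_eq_fintype_card).symm
        _ ≤ ∑ _i : β, Nat.factorial n := Finset.sum_le_sum fun i _ => hTle i
        _ = (n + 1) * Nat.factorial n := by
            rw [Finset.sum_const, Finset.card_univ, hcard, smul_eq_mul]
    rw [← Nat.card_coe_set_eq]
    calc Nat.card ↥S ≤ (n + 1) * Nat.factorial n := le_trans step1 step2
      _ = Nat.factorial (n + 1) := (Nat.factorial_succ n).symm

/-- In the abstract preference-list setting (each of `m` agents has a strict preference order
on the items, encoded by an injective rank function, lower rank = more preferred), the number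
of Pareto efficient injective matchings is at most `m!`. -/
theorem stmt9 {α : Type*} [Fintype α] (m : ℕ) (hmn : m ≤ Fintype.card α)
    (rank : Fin m → α → ℕ) (hrank : ∀ i, Function.Injective (rank i)) :
    Set.ncard {π : Fin m → α | Function.Injective π ∧
      ¬ ∃ σ : Fin m → α, Function.Injective σ ∧ σ ≠ π ∧
        ∀ i, rank i (σ i) ≤ rank i (π i)} ≤ Nat.factorial m := by
  exact count_PE m (Fintype.card_fin m) rank hrank
end

section
/- Let m agents have strict preference lists over n items satisfying: agents 1,…,j all have lists beginning with the prefix (a_1,…,a_j) in this order; agent j+1's list begins with a_{j+1}; and agents j+2,…,m all have lists beginning with the prefix (a_{j+2},…,a_m) in this order, where a_1,…,a_m are m distinct items. Then every Pareto efficient matching matches the agents exactly to the set {a_1,…,a_m}; moreover agents 1..j are matched within {a_1,…,a_j}, agent j+1 to a_{j+1}, and agents j+2..m within {a_{j+2},…,a_m}. -/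
/-- Any partial injection on a finite type extends to a permutation. -/
lemma extend_partial {X : Type*} [Fintype X] (p : X → Option X)
    (hp : ∀ x x' y, p x = some y → p x' = some y → x = x') :
    ∃ g : Equiv.Perm X, ∀ x y, p x = some y → g x = y := by
  classical
  let f : {x // (p x).isSome} → X := fun x => (p x.1).get x.2
  have hpf : ∀ x : {x // (p x).isSome}, p x.1 = some (f x) :=
    fun x => (Option.some_get x.2).symm
  have hf : Function.Injective f := by
    intro x x' h
    exact Subtype.ext (hp _ _ _ (hpf x) (h ▸ hpf x'))
  let e : {x // (p x).isSome} ≃ {x // x ∈ Set.range f} := Equiv.ofInjective f hf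
  refine ⟨e.extendSubtype, ?_⟩
  intro x y hxy
  have hx : (p x).isSome := by rw [hxy]; rfl
  rw [Equiv.extendSubtype_apply_of_mem e x hx]
  have h1 : (e ⟨x, hx⟩ : X) = f ⟨x, hx⟩ := rfl
  rw [h1]
  have := hpf ⟨x, hx⟩
  rw [hxy] at this
  exact (Option.some_injective _ this).symm

/-- Block-preference lemma (Lemma 9).  Agents `0,…,j−1` have lists beginning with the prefix
`(a 0,…,a (j−1))` in this order, agent `j`'s list begins with `a j`, and agents
`j+1,…,m−1` have lists beginning with the prefix `(a (j+1),…,a (m−1))` in this order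
("list of agent `i` begins with the prefix ending at `a l`" is expressed by saying that the
items agent `i` strictly prefers to `a l` are exactly the earlier items of the prefix).
Then every Pareto efficient matching matches the agents exactly to `{a 0,…,a (m−1)}`;
moreover agents `< j` are matched within `{a 0,…,a (j−1)}`, agent `j` to `a j`, and agents
`> j` within `{a (j+1),…,a (m−1)}`. -/
theorem stmt11 {α : Type*} [Fintype α] (m : ℕ) (j : ℕ) (hj : j < m)
    (rank : Fin m → α → ℕ) (hrank : ∀ i, Function.Injective (rank i))
    (a : Fin m → α) (ha : Function.Injective a)
    (h1 : ∀ i : Fin m, (i : ℕ) < j → ∀ l : Fin m, (l : ℕ) < j → ∀ x : α,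
      rank i x < rank i (a l) ↔ ∃ l' : Fin m, l' < l ∧ x = a l')
    (h2 : ∀ x : α, rank ⟨j, hj⟩ (a ⟨j, hj⟩) ≤ rank ⟨j, hj⟩ x)
    (h3 : ∀ i : Fin m, j < (i : ℕ) → ∀ l : Fin m, j < (l : ℕ) → ∀ x : α,
      rank i x < rank i (a l) ↔ ∃ l' : Fin m, j < (l' : ℕ) ∧ l' < l ∧ x = a l')
    (π : Fin m → α) (hπ : Function.Injective π)
    (heff : ¬ ∃ σ : Fin m → α, Function.Injective σ ∧ σ ≠ π ∧
      ∀ i, rank i (σ i) ≤ rank i (π i)) :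
    (∀ i : Fin m, (i : ℕ) < j → ∃ l : Fin m, (l : ℕ) < j ∧ π i = a l) ∧
    π ⟨j, hj⟩ = a ⟨j, hj⟩ ∧
    (∀ i : Fin m, j < (i : ℕ) → ∃ l : Fin m, j < (l : ℕ) ∧ π i = a l) ∧
    Set.range π = Set.range a := by
  classical
  -- Block 1 partial injection and its extension to a permutation of the subtype
  set p1 : {i : Fin m // (i : ℕ) < j} → Option {i : Fin m // (i : ℕ) < j} := fun x =>
    if h : ∃ l : {l : Fin m // (l : ℕ) < j}, π x.1 = a l.1 then some h.choose else none
    with hp1def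
  have hp1spec : ∀ x y, p1 x = some y → π x.1 = a y.1 := by
    intro x y h
    rw [hp1def] at h
    dsimp only at h
    by_cases hex : ∃ l : {l : Fin m // (l : ℕ) < j}, π x.1 = a l.1
    · rw [dif_pos hex] at h
      obtain rfl : hex.choose = y := Option.some_injective _ h
      exact hex.choose_spec
    · rw [dif_neg hex] at h; cases h
  obtain ⟨g1, hg1⟩ := extend_partial p1 (fun x x' y hx hx' =>
    Subtype.ext (hπ ((hp1spec x y hx).trans (hp1spec x' y hx').symm)))
  have hg1' : ∀ (x l : {i : Fin m // (i : ℕ) < j}), π x.1 = a l.1 → g1 x = l := by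
    intro x l hl
    have hex : ∃ l : {l : Fin m // (l : ℕ) < j}, π x.1 = a l.1 := ⟨l, hl⟩
    have hch : hex.choose = l := Subtype.ext (ha (hex.choose_spec.symm.trans hl))
    refine (hg1 x hex.choose ?_).trans hch
    rw [hp1def]; dsimp only; rw [dif_pos hex]
  -- Block 3 similarly
  set p3 : {i : Fin m // j < (i : ℕ)} → Option {i : Fin m // j < (i : ℕ)} := fun x =>
    if h : ∃ l : {l : Fin m // j < (l : ℕ)}, π x.1 = a l.1 then some h.choose else none
    with hp3def
  have hp3spec : ∀ x y, p3 x = some y → π x.1 = a y.1 := by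
    intro x y h
    rw [hp3def] at h
    dsimp only at h
    by_cases hex : ∃ l : {l : Fin m // j < (l : ℕ)}, π x.1 = a l.1
    · rw [dif_pos hex] at h
      obtain rfl : hex.choose = y := Option.some_injective _ h
      exact hex.choose_spec
    · rw [dif_neg hex] at h; cases h
  obtain ⟨g3, hg3⟩ := extend_partial p3 (fun x x' y hx hx' =>
    Subtype.ext (hπ ((hp3spec x y hx).trans (hp3spec x' y hx').symm)))
  have hg3' : ∀ (x l : {i : Fin m // j < (i : ℕ)}), π x.1 = a l.1 → g3 x = l := by
    intro x l hl
    have hex : ∃ l : {l : Fin m // j < (l : ℕ)}, π x.1 = a l.1 := ⟨l, hl⟩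
    have hch : hex.choose = l := Subtype.ext (ha (hex.choose_spec.symm.trans hl))
    refine (hg3 x hex.choose ?_).trans hch
    rw [hp3def]; dsimp only; rw [dif_pos hex]
  -- the index permutation and the candidate improvement σ = a ∘ ι
  set ι : Fin m → Fin m := fun i =>
    if h : (i : ℕ) < j then (g1 ⟨i, h⟩).1
    else if h' : j < (i : ℕ) then (g3 ⟨i, h'⟩).1
    else ⟨j, hj⟩ with hιdef
  have hι1 : ∀ (i : Fin m) (h : (i : ℕ) < j), ι i = (g1 ⟨i, h⟩).1 := by
    intro i h; rw [hιdef]; dsimp only; rw [dif_pos h]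
  have hι3 : ∀ (i : Fin m) (h : j < (i : ℕ)), ι i = (g3 ⟨i, h⟩).1 := by
    intro i h; rw [hιdef]; dsimp only; rw [dif_neg (by omega), dif_pos h]
  have hι2 : ∀ (i : Fin m), (i : ℕ) = j → ι i = ⟨j, hj⟩ := by
    intro i h; rw [hιdef]; dsimp only; rw [dif_neg (by omega), dif_neg (by omega)]
  have hιlt : ∀ (i : Fin m) (h : (i : ℕ) < j), ((ι i : Fin m) : ℕ) < j := by
    intro i h; rw [hι1 i h]; exact (g1 ⟨i, h⟩).2
  have hιgt : ∀ (i : Fin m) (h : j < (i : ℕ)), j < ((ι i : Fin m) : ℕ) := by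
    intro i h; rw [hι3 i h]; exact (g3 ⟨i, h⟩).2
  have hι2v : ∀ (i : Fin m), (i : ℕ) = j → ((ι i : Fin m) : ℕ) = j := by
    intro i h; rw [hι2 i h]
  have hιinj : Function.Injective ι := by
    intro i i' h
    rcases lt_trichotomy ((i : ℕ)) j with hi | hi | hi <;>
      rcases lt_trichotomy ((i' : ℕ)) j with hi' | hi' | hi'
    · rw [hι1 i hi, hι1 i' hi'] at h
      have := g1.injective (Subtype.ext h)
      exact Fin.ext (congrArg (fun z => ((z : {i : Fin m // (i : ℕ) < j}) : Fin m).1) this)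
    · have h5 := hιlt i hi; have h6 := hι2v i' hi'; rw [h] at h5; omega
    · have h5 := hιlt i hi; have h6 := hιgt i' hi'; rw [h] at h5; omega
    · have h5 := hι2v i hi; have h6 := hιlt i' hi'; rw [h] at h5; omega
    · exact Fin.ext (hi.trans hi'.symm)
    · have h5 := hι2v i hi; have h6 := hιgt i' hi'; rw [h] at h5; omega
    · have h5 := hιgt i hi; have h6 := hιlt i' hi'; rw [h] at h5; omega
    · have h5 := hιgt i hi; have h6 := hι2v i' hi'; rw [h] at h5; omega
    · rw [hι3 i hi, hι3 i' hi'] at h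
      have := g3.injective (Subtype.ext h)
      exact Fin.ext (congrArg (fun z => ((z : {i : Fin m // j < (i : ℕ)}) : Fin m).1) this)
  have hιsurj : Function.Surjective ι := by
    intro l
    rcases lt_trichotomy ((l : ℕ)) j with hl | hl | hl
    · refine ⟨(g1.symm ⟨l, hl⟩).1, ?_⟩
      rw [hι1 _ (g1.symm ⟨l, hl⟩).2]
      have : (⟨(g1.symm ⟨l, hl⟩).1, (g1.symm ⟨l, hl⟩).2⟩ : {i : Fin m // (i : ℕ) < j})
          = g1.symm ⟨l, hl⟩ := rfl
      rw [this, Equiv.apply_symm_apply]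
    · refine ⟨⟨j, hj⟩, ?_⟩
      rw [hι2 ⟨j, hj⟩ rfl]
      exact (Fin.ext hl).symm
    · refine ⟨(g3.symm ⟨l, hl⟩).1, ?_⟩
      rw [hι3 _ (g3.symm ⟨l, hl⟩).2]
      have : (⟨(g3.symm ⟨l, hl⟩).1, (g3.symm ⟨l, hl⟩).2⟩ : {i : Fin m // j < (i : ℕ)})
          = g3.symm ⟨l, hl⟩ := rfl
      rw [this, Equiv.apply_symm_apply]
  set σ : Fin m → α := a ∘ ι with hσdef
  have hσinj : Function.Injective σ := ha.comp hιinj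
  -- σ is a weak improvement
  have himp : ∀ i, rank i (σ i) ≤ rank i (π i) := by
    intro i
    rcases lt_trichotomy ((i : ℕ)) j with hi | hi | hi
    · show rank i (a (ι i)) ≤ rank i (π i)
      rw [hι1 i hi]
      by_cases hex : ∃ l' : Fin m, (l' : ℕ) < j ∧ π i = a l'
      · obtain ⟨l', hl', hpl⟩ := hex
        rw [hg1' ⟨i, hi⟩ ⟨l', hl'⟩ hpl, ← hpl]
      · by_contra hlt
        rw [not_le] at hlt
        obtain ⟨l'', hlt'', heq⟩ :=
          (h1 i hi (g1 ⟨i, hi⟩).1 (g1 ⟨i, hi⟩).2 (π i)).mp hlt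
        exact hex ⟨l'', lt_trans (Fin.lt_iff_val_lt_val.mp hlt'') (g1 ⟨i, hi⟩).2, heq⟩
    · show rank i (a (ι i)) ≤ rank i (π i)
      rw [hι2 i hi]
      have : i = ⟨j, hj⟩ := Fin.ext hi
      rw [this]
      exact h2 _
    · show rank i (a (ι i)) ≤ rank i (π i)
      rw [hι3 i hi]
      by_cases hex : ∃ l' : Fin m, j < (l' : ℕ) ∧ π i = a l'
      · obtain ⟨l', hl', hpl⟩ := hex
        rw [hg3' ⟨i, hi⟩ ⟨l', hl'⟩ hpl, ← hpl]
      · by_contra hlt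
        rw [not_le] at hlt
        obtain ⟨l'', hj'', _, heq⟩ :=
          (h3 i hi (g3 ⟨i, hi⟩).1 (g3 ⟨i, hi⟩).2 (π i)).mp hlt
        exact hex ⟨l'', hj'', heq⟩
  -- Pareto efficiency forces σ = π
  have hσπ : σ = π := by
    by_contra hne
    exact heff ⟨σ, hσinj, hne, himp⟩
  refine ⟨?_, ?_, ?_, ?_⟩
  · intro i hi
    exact ⟨ι i, hιlt i hi, by rw [← hσπ]; rfl⟩
  · rw [← hσπ]
    show a (ι ⟨j, hj⟩) = a ⟨j, hj⟩
    rw [hι2 ⟨j, hj⟩ rfl]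
  · intro i hi
    exact ⟨ι i, hιgt i hi, by rw [← hσπ]; rfl⟩
  · rw [← hσπ, hσdef]
    exact hιsurj.range_comp a
end

section
/- For every m and n ≥ ⌊m/2⌋ + m, there exist m strict preference lists over {1,…,n} such that the number of distinct image sets of Pareto efficient matchings is at least C(m, ⌈m/2⌉), which is Ω(2^m/√m). -/
/-!
Fix `k` with `k + m ≤ n`. All agents rank the items `0, …, k-1` first, in this order, and then
agent `i`'s own item `k + i`. For each set `T` of `k` agents, let the agents of `T` share the top
items and everybody else take their own item. A matching that weakly improves every agent still
gives every agent of `T` a top item, and an agent outside `T` either a top item or its own item;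
as there are only `k` top items, everybody outside `T` keeps their own item. On `T` the matching
can only move agents to weakly smaller top items, and comparing sums over the bijection onto
`{0, …, k-1}` shows that it moves nobody. The image set records `T` as the set of agents whose
own item is missing, so the `C(m, k)` choices of `T` give distinct image sets; take `k = ⌊m/2⌋`.
-/

open Finset

theorem Finset.eqOn_of_forall_le_of_injOn {ι M : Type*} [AddCommMonoid M] [PartialOrder M]
    [IsOrderedCancelAddMonoid M] [DecidableEq M] {s : Finset ι} {t : Finset M} {f g : ι → M}
    (hf : Set.InjOn f s) (hg : Set.InjOn g s)
    (hfst : Set.MapsTo f s t) (hgst : Set.MapsTo g s t) (hts : #t ≤ #s)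
    (hle : ∀ i ∈ s, f i ≤ g i) : Set.EqOn f g s := by
  have image_eq_of_injOn {h : ι → M} (hh : Set.InjOn h s) (hst : Set.MapsTo h s t) :
      s.image h = t :=
    eq_of_subset_of_card_le (image_subset_iff.mpr fun _ hi => hst hi)
      (by rwa [card_image_of_injOn hh])
  have hsum : ∑ i ∈ s, f i = ∑ i ∈ s, g i :=
    calc ∑ i ∈ s, f i = ∑ x ∈ s.image f, x := (sum_image (f := id) hf).symm
      _ = ∑ x ∈ s.image g, x := by rw [image_eq_of_injOn hf hfst, image_eq_of_injOn hg hgst]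
      _ = ∑ i ∈ s, g i := sum_image hg
  exact (sum_eq_sum_iff_of_le hle).mp hsum

section

variable {m n : ℕ}

def IsParetoOptimal (rank : Fin m → Fin n → ℕ) (π : Fin m → Fin n) : Prop :=
  ¬ ∃ σ : Fin m → Fin n,
    Function.Injective σ ∧ σ ≠ π ∧ ∀ i, rank i (σ i) ≤ rank i (π i)

def paretoOptimalImages (rank : Fin m → Fin n → ℕ) : Set (Finset (Fin n)) :=
  {S | ∃ π : Fin m → Fin n,
    Function.Injective π ∧ IsParetoOptimal rank π ∧ S = univ.image π}

def sharedTopRank (k : ℕ) (i : Fin m) (j : Fin n) : ℕ :=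
  if j.val < k then j.val else if j.val = k + i.val then k else j.val + 1

theorem sharedTopRank_injective (k : ℕ) (i : Fin m) :
    Function.Injective (sharedTopRank (n := n) k i) := by
  intro j j' h
  unfold sharedTopRank at h
  ext
  split_ifs at h <;> omega

theorem sharedTopRank_of_val_eq {k : ℕ} {i : Fin m} {j : Fin n} (hj : j.val = k + i.val) :
    sharedTopRank k i j = k := by
  simp [sharedTopRank, hj]

theorem val_le_of_sharedTopRank_le {k : ℕ} {i : Fin m} {j j' : Fin n} (hj' : j'.val < k)
    (h : sharedTopRank k i j ≤ sharedTopRank k i j') : j.val ≤ j'.val := by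
  unfold sharedTopRank at h
  split_ifs at h <;> omega

theorem val_lt_or_eq_of_sharedTopRank_le {k : ℕ} {i : Fin m} {j : Fin n}
    (h : sharedTopRank k i j ≤ k) : j.val < k ∨ j.val = k + i.val := by
  unfold sharedTopRank at h
  split_ifs at h <;> omega

variable {k : ℕ} (hkn : k + m ≤ n) (T : Finset (Fin m)) (hT : #T = k)

def topMatching (i : Fin m) : Fin n :=
  Fin.castLE hkn <|
    if h : i ∈ T then Fin.castAdd m ((T.orderIsoOfFin hT).symm ⟨i, h⟩) else Fin.natAdd k i

variable {T} {i : Fin m}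

theorem val_topMatching_lt (h : i ∈ T) : (topMatching hkn T hT i).val < k := by
  simp [topMatching, h]

theorem val_topMatching_of_notMem (h : i ∉ T) : (topMatching hkn T hT i).val = k + i.val := by
  simp [topMatching, h]

theorem topMatching_injective : Function.Injective (topMatching hkn T hT) := by
  intro a b hab
  have hval := congrArg Fin.val hab
  by_cases ha : a ∈ T <;> by_cases hb : b ∈ T
  · simp only [topMatching, ha, hb, dite_true, Fin.val_castLE, Fin.val_castAdd] at hval
    simpa using (T.orderIsoOfFin hT).symm.injective (Fin.ext hval)
  · have := val_topMatching_lt hkn hT ha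
    have := val_topMatching_of_notMem hkn hT hb
    omega
  · have := val_topMatching_of_notMem hkn hT ha
    have := val_topMatching_lt hkn hT hb
    omega
  · have := val_topMatching_of_notMem hkn hT ha
    have := val_topMatching_of_notMem hkn hT hb
    ext; omega

theorem castLE_natAdd_mem_image_topMatching_iff :
    Fin.castLE hkn (Fin.natAdd k i) ∈ univ.image (topMatching hkn T hT) ↔ i ∉ T := by
  constructor
  · rintro hmem hi
    obtain ⟨a, -, ha⟩ := mem_image.mp hmem
    have hval := congrArg Fin.val ha
    simp only [Fin.val_castLE, Fin.val_natAdd] at hval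
    by_cases haT : a ∈ T
    · have := val_topMatching_lt hkn hT haT
      omega
    · have := val_topMatching_of_notMem hkn hT haT
      exact haT (Fin.ext (by omega : a.val = i.val) ▸ hi)
  · intro hi
    exact mem_image.mpr ⟨i, mem_univ i, Fin.ext (val_topMatching_of_notMem hkn hT hi)⟩

theorem isParetoOptimal_topMatching :
    IsParetoOptimal (sharedTopRank k) (topMatching hkn T hT) := by
  rintro ⟨σ, hσ, hne, hle⟩
  set π := topMatching hkn T hT
  have le_of_mem : ∀ i ∈ T, (σ i).val ≤ (π i).val := fun i hi =>
    val_le_of_sharedTopRank_le (val_topMatching_lt hkn hT hi) (hle i)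
  have top_or_own : ∀ i ∉ T, (σ i).val < k ∨ (σ i).val = k + i.val := fun i hi =>
    val_lt_or_eq_of_sharedTopRank_le
      ((hle i).trans (sharedTopRank_of_val_eq (val_topMatching_of_notMem hkn hT hi)).le)
  have top_agents : univ.filter (fun i => (σ i).val < k) = T := by
    refine (eq_of_subset_of_card_le (fun i hi => ?_) ?_).symm
    · exact mem_filter.mpr
        ⟨mem_univ i, (le_of_mem i hi).trans_lt (val_topMatching_lt hkn hT hi)⟩
    · calc _ ≤ #(range k) := card_le_card_of_injOn (fun i => (σ i).val)
              (fun i hi => by simpa using hi) (fun a _ b _ h => hσ (Fin.ext h))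
        _ = #T := by rw [card_range, hT]
  have eq_of_notMem : ∀ i ∉ T, σ i = π i := fun i hi => by
    have not_top : ¬ (σ i).val < k := fun h => hi (top_agents ▸ by simp [h])
    exact Fin.ext <|
      (top_or_own i hi).resolve_left not_top ▸ (val_topMatching_of_notMem hkn hT hi).symm
  have eq_on_T : Set.EqOn (fun i => (σ i).val) (fun i => (π i).val) T :=
    eqOn_of_forall_le_of_injOn (t := range k) (fun a _ b _ h => hσ (Fin.ext h))
      (fun a _ b _ h => topMatching_injective hkn hT (Fin.ext h))
      (fun i hi => mem_range.mpr ((le_of_mem i hi).trans_lt (val_topMatching_lt hkn hT hi)))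
      (fun i hi => mem_range.mpr (val_topMatching_lt hkn hT hi)) (by rw [card_range, hT])
      le_of_mem
  exact hne (funext fun i => if hi : i ∈ T then Fin.ext (eq_on_T hi) else eq_of_notMem i hi)

end

theorem choose_le_ncard_paretoOptimal_images {m n k : ℕ} (hkn : k + m ≤ n) :
    m.choose k ≤ (paretoOptimalImages (sharedTopRank (n := n) (m := m) k)).ncard := by
  let images : {T : Finset (Fin m) // #T = k} → paretoOptimalImages (sharedTopRank k) :=
    fun T => ⟨univ.image (topMatching hkn T.1 T.2), _, topMatching_injective hkn T.2,
      isParetoOptimal_topMatching hkn T.2, rfl⟩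
  have images_injective : Function.Injective images := fun T T' h => by
    have h' : univ.image (topMatching hkn T.1 T.2) = univ.image (topMatching hkn T'.1 T'.2) :=
      congrArg Subtype.val h
    ext i
    have own_item_iff := castLE_natAdd_mem_image_topMatching_iff hkn T.2 (i := i)
    rw [h', castLE_natAdd_mem_image_topMatching_iff] at own_item_iff
    exact not_iff_not.mp own_item_iff.symm
  simpa [Set.ncard_univ, Fintype.card_finset_len] using
    Nat.card_le_card_of_injective images images_injective

/-- For every `m` and `n ≥ ⌊m/2⌋ + m` there are `m` strict preference lists over `n` items
for which the number of distinct image sets of Pareto efficient matchings is at least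
`C(m, ⌈m/2⌉)`. -/
theorem stmt12 (m n : ℕ) (hn : m / 2 + m ≤ n) :
    ∃ rank : Fin m → Fin n → ℕ, (∀ i, Function.Injective (rank i)) ∧
      Nat.choose m ((m + 1) / 2) ≤
        Set.ncard {S : Finset (Fin n) | ∃ π : Fin m → Fin n, Function.Injective π ∧
          (¬ ∃ σ : Fin m → Fin n, Function.Injective σ ∧ σ ≠ π ∧
            ∀ i, rank i (σ i) ≤ rank i (π i)) ∧
          S = Finset.univ.image π} := by
  refine ⟨sharedTopRank (m / 2), sharedTopRank_injective (m / 2), ?_⟩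
  rw [Nat.choose_symm_of_eq_add (by omega : m = (m + 1) / 2 + m / 2)]
  exact choose_le_ncard_paretoOptimal_images hn
end

section
/- In a serial dictatorship over shared-prefix lists: if each agent, in some order λ, picks its most preferred item not yet claimed, and all lists have the same first ⌊m/2⌋ items (set S) in the same order, and the (⌊m/2⌋+1)-st item of agent i's list is s'_i with s'_1,…,s'_m distinct and disjoint from S, then the resulting matching's image is S together with {s'_{λ(k)} : k > ⌊m/2⌋} (the items of the agents placed in the last ⌈m/2⌉ positions of λ). -/
/-- Serial dictatorship over shared-prefix lists.  All lists share the common prefix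
`S 0,…,S (m/2 − 1)` (in the same order), and the `(m/2 + 1)`-st item of agent `i`'s list is
`s' i`, the `s' i` being pairwise distinct and disjoint from the prefix.  If `π` is the
serial-dictatorship matching for an ordering `lam` of the agents (each agent, in turn, takes
its most preferred unclaimed item), then the image of `π` is the prefix set together with the
items `s' (lam k)` of the agents placed in the last `⌈m/2⌉` positions of `lam`. -/
theorem stmt13 {α : Type*} (m : ℕ)
    (S : Fin (m / 2) → α) (hS : Function.Injective S)
    (s' : Fin m → α) (hs' : Function.Injective s')
    (hdisj : ∀ (l : Fin (m / 2)) (i : Fin m), S l ≠ s' i)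
    (rank : Fin m → α → ℕ) (hrank : ∀ i, Function.Injective (rank i))
    (hprefix : ∀ i : Fin m, ∀ l : Fin (m / 2), ∀ x : α,
      rank i x < rank i (S l) ↔ ∃ l' : Fin (m / 2), l' < l ∧ x = S l')
    (hpos : ∀ i : Fin m, ∀ x : α,
      rank i x < rank i (s' i) ↔ ∃ l : Fin (m / 2), x = S l)
    (lam : Equiv.Perm (Fin m))
    (π : Fin m → α) (hπ : Function.Injective π)
    (hserial : ∀ k : Fin m, ∀ x : α,
      (∀ l : Fin m, l < k → π (lam l) ≠ x) →
        rank (lam k) (π (lam k)) ≤ rank (lam k) x) :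
    Set.range π =
      Set.range S ∪ {x | ∃ k : Fin m, m / 2 ≤ (k : ℕ) ∧ x = s' (lam k)} := by
  have hπl : Function.Injective (fun k => π (lam k)) :=
    hπ.comp lam.injective
  have key : ∀ k : Fin m,
      π (lam k) = if h : (k : ℕ) < m / 2 then S ⟨k, h⟩ else s' (lam k) := by
    suffices H : ∀ n : ℕ, ∀ k : Fin m, (k : ℕ) < n →
        π (lam k) = if h : (k : ℕ) < m / 2 then S ⟨k, h⟩ else s' (lam k) by
      intro k; exact H (k + 1) k (Nat.lt_succ_self _)
    intro n
    induction n with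
    | zero => intro k hk; omega
    | succ n ihn =>
      intro k hkn
      have ih : ∀ l : Fin m, l < k →
          π (lam l) = if h : (l : ℕ) < m / 2 then S ⟨l, h⟩ else s' (lam l) := by
        intro l hl
        exact ihn l (by have := Fin.lt_def.mp hl; omega)
      by_cases h : (k : ℕ) < m / 2
      · rw [dif_pos h]
        -- S ⟨k, h⟩ is unclaimed
        have hun : ∀ l : Fin m, l < k → π (lam l) ≠ S ⟨k, h⟩ := by
          intro l hl
          have hl2 : (l : ℕ) < m / 2 := lt_of_lt_of_le hl (le_of_lt h)
          rw [ih l hl, dif_pos hl2]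
          intro heq
          have : (l : ℕ) = (k : ℕ) := by simpa using hS heq
          omega
        have hle := hserial k (S ⟨k, h⟩) hun
        rcases lt_or_eq_of_le hle with hlt | heq
        · exfalso
          obtain ⟨l', hl', hx⟩ := (hprefix (lam k) ⟨k, h⟩ (π (lam k))).mp hlt
          have hl'm : (l' : ℕ) < m := lt_of_lt_of_le (l'.isLt) (Nat.div_le_self m 2)
          have hlt' : (⟨l', hl'm⟩ : Fin m) < k := by
            simpa [Fin.lt_def] using hl'
          have hclaim : π (lam ⟨l', hl'm⟩) = S l' := by
            rw [ih _ hlt', dif_pos (by simpa using l'.isLt)]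
          have : π (lam ⟨l', hl'm⟩) = π (lam k) := by rw [hclaim, hx]
          have := hπl this
          have : (l' : ℕ) = (k : ℕ) := congrArg Fin.val this
          omega
        · exact hrank (lam k) heq
      · rw [dif_neg h]
        push_neg at h
        -- s' (lam k) is unclaimed
        have hun : ∀ l : Fin m, l < k → π (lam l) ≠ s' (lam k) := by
          intro l hl
          rw [ih l hl]
          by_cases hl2 : (l : ℕ) < m / 2
          · rw [dif_pos hl2]; exact hdisj _ _
          · rw [dif_neg hl2]
            intro heq
            have := lam.injective (hs' heq)
            exact absurd this (Fin.ne_of_lt hl)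
        have hle := hserial k (s' (lam k)) hun
        rcases lt_or_eq_of_le hle with hlt | heq
        · exfalso
          obtain ⟨l', hx⟩ := (hpos (lam k) (π (lam k))).mp hlt
          have hl'm : (l' : ℕ) < m := lt_of_lt_of_le (l'.isLt) (Nat.div_le_self m 2)
          have hlt' : (⟨l', hl'm⟩ : Fin m) < k := by
            rw [Fin.lt_def]
            exact lt_of_lt_of_le l'.isLt h
          have hclaim : π (lam ⟨l', hl'm⟩) = S l' := by
            rw [ih _ hlt', dif_pos (by simpa using l'.isLt)]
          have heq2 : π (lam ⟨l', hl'm⟩) = π (lam k) := by rw [hclaim, hx]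
          have := Fin.ne_of_lt hlt'
          exact this (hπl heq2)
        · exact hrank (lam k) heq
  ext x
  constructor
  · rintro ⟨j, rfl⟩
    obtain ⟨k, rfl⟩ : ∃ k, j = lam k := ⟨lam.symm j, (Equiv.apply_symm_apply lam j).symm⟩
    have hk := key k
    by_cases h : ((k : Fin m) : ℕ) < m / 2
    · left
      rw [dif_pos h] at hk
      exact ⟨_, hk.symm⟩
    · right
      rw [dif_neg h] at hk
      exact ⟨k, le_of_not_gt h, hk⟩
  · rintro (⟨l, rfl⟩ | ⟨k, hk, rfl⟩)
    · have hl'm : (l : ℕ) < m := lt_of_lt_of_le l.isLt (Nat.div_le_self m 2)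
      refine ⟨lam ⟨l, hl'm⟩, ?_⟩
      rw [key ⟨l, hl'm⟩, dif_pos (by simpa using l.isLt)]
    · refine ⟨lam k, ?_⟩
      rw [key k, dif_neg (by omega)]
end
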